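/- arXiv:1707.05596 — 7 statements merged into one kernel-verified Lean document; each statement's English description precedes it below -/
import Mathlib

section
/- For any real random variable X and any continuous decreasing function ψ: ℝ → ℝ, the left-continuous quantile function satisfies F_{ψ(X)}^{-1}(z) = ψ(F_X^{-1}((1-z)+)) for all z in (0,1), where F_X^{-1}(t+) is the right-continuous quantile function of X. -/
/-!
Put `a = F_X⁻¹((1 - z)+)`. Since `ψ` is strictly decreasing, `{ψ(X) ≤ ψ a} = {X ≥ a}`, whose
probability `1 - P(X < a)` is at least `z` because `F_X ≤ 1 - z` to the left of `a`. If `y < ψ a`,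
continuity of `ψ` gives `x > a` with `y < ψ x`, so `{ψ(X) ≤ y} ⊆ {X > x}` has probability
`1 - F_X(x) < z`. Hence `ψ a` is the least `y` with `F_{ψ(X)}(y) ≥ z`.
-/

open MeasureTheory

variable {Ω : Type*} [MeasurableSpace Ω]

/-- The cumulative distribution function of `X` under `μ`. -/
noncomputable def cdf (μ : Measure Ω) (X : Ω → ℝ) (x : ℝ) : ℝ :=
  (μ {ω | X ω ≤ x}).toReal

/-- The left-continuous quantile function `F_X^{-1}(t) = inf {x : F_X(x) ≥ t}`. -/
noncomputable def qL (μ : Measure Ω) (X : Ω → ℝ) (t : ℝ) : ℝ :=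
  sInf {x : ℝ | t ≤ cdf μ X x}

/-- The right-continuous quantile function `F_X^{-1}(t+) = inf {x : F_X(x) > t}`. -/
noncomputable def qR (μ : Measure Ω) (X : Ω → ℝ) (t : ℝ) : ℝ :=
  sInf {x : ℝ | t < cdf μ X x}

open Set Topology

namespace ProbabilityTheory

variable {ν : Measure ℝ}

lemma bddBelow_setOf_lt_cdf {t : ℝ} (ht : 0 < t) : BddBelow {x | t < cdf ν x} := by
  obtain ⟨b, hb⟩ := ((tendsto_cdf_atBot ν).eventually_lt_const ht).exists
  exact ⟨b, fun x hx => le_of_not_ge fun hxb => (hx.trans_le (monotone_cdf ν hxb)).not_gt hb⟩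

lemma nonempty_setOf_lt_cdf {t : ℝ} (ht : t < 1) : {x | t < cdf ν x}.Nonempty :=
  ((tendsto_cdf_atTop ν).eventually_const_lt ht).exists

lemma cdf_le_of_lt_sInf {t x : ℝ} (ht : 0 < t) (hx : x < sInf {x | t < cdf ν x}) :
    cdf ν x ≤ t :=
  not_lt.mp fun h => notMem_of_lt_csInf hx (bddBelow_setOf_lt_cdf ht) h

lemma lt_cdf_of_sInf_lt {t x : ℝ} (ht : t < 1) (hx : sInf {x | t < cdf ν x} < x) :
    t < cdf ν x := by
  obtain ⟨y, hy, hyx⟩ := exists_lt_of_csInf_lt (nonempty_setOf_lt_cdf ht) hx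
  exact hy.trans_le (monotone_cdf ν hyx.le)

variable [IsProbabilityMeasure ν]

lemma measureReal_Iio_eq_leftLim_cdf (a : ℝ) : ν.real (Iio a) = Function.leftLim (cdf ν) a := by
  have h := (cdf ν).measure_Iio (tendsto_cdf_atBot ν) a
  rw [measure_cdf, sub_zero] at h
  rw [measureReal_def, h,
    ENNReal.toReal_ofReal ((cdf_nonneg ν _).trans ((monotone_cdf ν).le_leftLim (sub_one_lt a)))]

lemma measureReal_Iio_le_of_cdf_le {a t : ℝ} (h : ∀ x < a, cdf ν x ≤ t) : ν.real (Iio a) ≤ t := by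
  rw [measureReal_Iio_eq_leftLim_cdf]
  exact le_of_tendsto ((monotone_cdf ν).tendsto_leftLim a) (eventually_nhdsWithin_of_forall h)

lemma cdf_map_eq_measureReal_preimage {ψ : ℝ → ℝ} (hψ : Measurable ψ) (y : ℝ) :
    cdf (ν.map ψ) y = ν.real (ψ ⁻¹' Iic y) := by
  have := Measure.isProbabilityMeasure_map (μ := ν) hψ.aemeasurable
  rw [cdf_eq_real, map_measureReal_apply hψ measurableSet_Iic]

theorem isLeast_setOf_le_cdf_map_of_strictAnti {ψ : ℝ → ℝ} (hψc : Continuous ψ)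
    (hψa : StrictAnti ψ) {z : ℝ} (hz0 : 0 < z) (hz1 : z < 1) :
    IsLeast {y | z ≤ cdf (ν.map ψ) y} (ψ (sInf {x | 1 - z < cdf ν x})) := by
  set a := sInf {x | 1 - z < cdf ν x}
  refine ⟨?_, fun y hy => le_of_not_gt fun hya => ?_⟩
  · have hpre : ψ ⁻¹' Iic (ψ a) = (Iio a)ᶜ := by
      ext x; simp [hψa.le_iff_ge]
    have hIio : ν.real (Iio a) ≤ 1 - z :=
      measureReal_Iio_le_of_cdf_le fun x hx => cdf_le_of_lt_sInf (by linarith) hx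
    rw [mem_ofPred_eq, cdf_map_eq_measureReal_preimage hψc.measurable, hpre,
      probReal_compl_eq_one_sub measurableSet_Iio]
    linarith
  · have hψ_right : ∀ᶠ x in 𝓝[>] a, y < ψ x :=
      (hψc.continuousWithinAt (s := Ioi a)).tendsto.eventually_const_lt hya
    obtain ⟨x, hyx, hax⟩ := (hψ_right.and self_mem_nhdsWithin).exists
    have hsub : ψ ⁻¹' Iic y ⊆ (Iic x)ᶜ := fun w hw =>
      not_le.mpr <| hψa.lt_iff_gt.mp ((mem_Iic.mp hw).trans_lt hyx)
    have hle := measureReal_mono (μ := ν) hsub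
    rw [probReal_compl_eq_one_sub measurableSet_Iic, ← cdf_eq_real] at hle
    have hlt := lt_cdf_of_sInf_lt (by linarith) hax
    rw [mem_ofPred_eq, cdf_map_eq_measureReal_preimage hψc.measurable] at hy
    linarith

end ProbabilityTheory

lemma cdf_eq_cdf_map (μ : Measure Ω) [IsProbabilityMeasure μ] {X : Ω → ℝ} (hX : Measurable X) :
    cdf μ X = ProbabilityTheory.cdf (μ.map X) := by
  have := Measure.isProbabilityMeasure_map (μ := μ) hX.aemeasurable
  ext x
  rw [ProbabilityTheory.cdf_eq_real, map_measureReal_apply hX measurableSet_Iic]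
  rfl

theorem stmt_3 (μ : Measure Ω) [IsProbabilityMeasure μ] (X : Ω → ℝ) (hX : Measurable X)
    (ψ : ℝ → ℝ) (hψc : Continuous ψ) (hψa : StrictAnti ψ)
    (z : ℝ) (hz : z ∈ Set.Ioo (0 : ℝ) 1) :
    qL μ (fun ω => ψ (X ω)) z = ψ (qR μ X (1 - z)) := by
  have := Measure.isProbabilityMeasure_map (μ := μ) hX.aemeasurable
  have hlaw : μ.map (fun ω => ψ (X ω)) = (μ.map X).map ψ :=
    (Measure.map_map hψc.measurable hX).symm
  rw [qL, qR, cdf_eq_cdf_map μ (X := fun ω => ψ (X ω)) (hψc.measurable.comp hX),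
    cdf_eq_cdf_map μ hX, hlaw]
  exact (ProbabilityTheory.isLeast_setOf_le_cdf_map_of_strictAnti hψc hψa hz.1 hz.2).csInf_eq
end

section
/- Let α ∈ (0,1) and suppose the probability space is atomless. Then the set A^0_α = {X bounded : P(X ≤ -ε) < 1-α for all ε > 0} is not num\'eraire-invariant: there exist a bounded random variable Y ∈ A^0_α and a strictly positive random variable Z with ZY bounded and ZY ∉ A^0_α. -/
open MeasureTheory

variable {Ω : Type*} [MeasurableSpace Ω]

/-- `A⁰_α = {X : P(X ≤ -ε) < 1 - α for all ε > 0}`. -/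
def A0 (μ : Measure Ω) (α : ℝ) : Set (Ω → ℝ) :=
  {X | ∀ ε : ℝ, 0 < ε → (μ {ω | X ω ≤ -ε}).toReal < 1 - α}

/-- On an atomless probability space (one supporting a uniformly distributed random
variable `U`), `A⁰_α` restricted to bounded random variables is not numéraire-invariant. -/
theorem stmt_12 (μ : Measure Ω) [IsProbabilityMeasure μ]
    (U : Ω → ℝ) (hU : Measurable U)
    (hUd : μ.map U = volume.restrict (Set.Icc (0 : ℝ) 1))
    (α : ℝ) (hα : α ∈ Set.Ioo (0 : ℝ) 1) :
    ∃ Y Z : Ω → ℝ, Measurable Y ∧ Measurable Z ∧ (∃ C : ℝ, ∀ ω, |Y ω| ≤ C) ∧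
      Y ∈ A0 μ α ∧ (∀ ω, 0 < Z ω) ∧ (∃ C : ℝ, ∀ ω, |Z ω * Y ω| ≤ C) ∧
      (fun ω => Z ω * Y ω) ∉ A0 μ α := by
  obtain ⟨hα0, hα1⟩ := hα
  set V : Ω → ℝ := fun ω => max 0 (min (U ω) 1) with hVdef
  have hV : Measurable V := measurable_const.max (hU.min measurable_const)
  have hV0 : ∀ ω, 0 ≤ V ω := fun ω => le_max_left _ _
  have hV1 : ∀ ω, V ω ≤ 1 := fun ω => max_le zero_le_one (min_le_right _ _)
  set Y : Ω → ℝ := fun ω => V ω - (1 - α) with hYdef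
  have hY : Measurable Y := hV.sub measurable_const
  set Z : Ω → ℝ := fun ω => if Y ω < 0 then -(Y ω)⁻¹ else 1 with hZdef
  have hZ : Measurable Z :=
    Measurable.ite (measurableSet_lt hY measurable_const) hY.inv.neg measurable_const
  have hmap : ∀ s : Set ℝ, MeasurableSet s →
      μ (U ⁻¹' s) = volume (s ∩ Set.Icc (0 : ℝ) 1) := by
    intro s hs
    rw [← Measure.map_apply hU hs, hUd, Measure.restrict_apply hs]
  -- key measure computation: μ {V ≤ c} = ofReal c for 0 ≤ c < 1
  have hle : ∀ c : ℝ, 0 ≤ c → c < 1 → μ {ω | V ω ≤ c} = ENNReal.ofReal c := by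
    intro c hc0 hc1
    have hset : {ω | V ω ≤ c} = U ⁻¹' Set.Iic c := by
      ext ω
      simp only [Set.mem_setOf_eq, Set.mem_preimage, Set.mem_Iic, hVdef]
      constructor
      · intro h
        have h1 : min (U ω) 1 ≤ c := le_trans (le_max_right _ _) h
        rcases min_cases (U ω) 1 with ⟨he, _⟩ | ⟨he, hlt⟩
        · rwa [he] at h1
        · rw [he] at h1; linarith
      · intro h
        exact max_le hc0 (le_trans (min_le_left _ _) h)
    rw [hset, hmap _ measurableSet_Iic]
    have h2 : Set.Iic c ∩ Set.Icc (0 : ℝ) 1 = Set.Icc 0 c := by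
      ext x
      simp only [Set.mem_inter_iff, Set.mem_Iic, Set.mem_Icc]
      constructor
      · rintro ⟨h1, h2, _⟩; exact ⟨h2, h1⟩
      · rintro ⟨h1, h2⟩; exact ⟨h2, h1, le_trans h2 hc1.le⟩
    rw [h2, Real.volume_Icc, sub_zero]
  have hlt : μ {ω | V ω < 1 - α} = ENNReal.ofReal (1 - α) := by
    have hset : {ω | V ω < 1 - α} = U ⁻¹' Set.Iio (1 - α) := by
      ext ω
      simp only [Set.mem_setOf_eq, Set.mem_preimage, Set.mem_Iio, hVdef]
      constructor
      · intro h
        have h1 : min (U ω) 1 < 1 - α := lt_of_le_of_lt (le_max_right _ _) h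
        rcases min_cases (U ω) 1 with ⟨he, _⟩ | ⟨he, hlt⟩
        · rwa [he] at h1
        · rw [he] at h1; linarith
      · intro h
        have h1 : min (U ω) 1 < 1 - α := lt_of_le_of_lt (min_le_left _ _) h
        exact max_lt (by linarith) h1
    rw [hset, hmap _ measurableSet_Iio]
    have h2 : Set.Iio (1 - α) ∩ Set.Icc (0 : ℝ) 1 = Set.Ico 0 (1 - α) := by
      ext x
      simp only [Set.mem_inter_iff, Set.mem_Iio, Set.mem_Icc, Set.mem_Ico]
      constructor
      · rintro ⟨h1, h2, _⟩; exact ⟨h2, h1⟩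
      · rintro ⟨h1, h2⟩; exact ⟨h2, h1, by linarith⟩
    rw [h2, Real.volume_Ico, sub_zero]
  refine ⟨Y, Z, hY, hZ, ⟨1, fun ω => ?_⟩, ?_, fun ω => ?_, ⟨1, fun ω => ?_⟩, ?_⟩
  · rw [abs_le]; constructor
    · have := hV0 ω; simp only [hYdef]; linarith
    · have := hV1 ω; simp only [hYdef]; linarith
  · -- Y ∈ A0
    intro ε hε
    have hset : {ω | Y ω ≤ -ε} = {ω | V ω ≤ 1 - α - ε} := by
      ext ω; simp only [Set.mem_setOf_eq, hYdef]; constructor <;> intro h <;> linarith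
    rw [hset]
    by_cases hc : 0 ≤ 1 - α - ε
    · rw [hle _ hc (by linarith), ENNReal.toReal_ofReal hc]; linarith
    · have : {ω | V ω ≤ 1 - α - ε} = ∅ := by
        ext ω; simp only [Set.mem_setOf_eq, Set.mem_empty_iff_false, iff_false, not_le]
        have := hV0 ω; linarith
      rw [this, measure_empty]; simp; linarith
  · -- Z > 0
    simp only [hZdef]
    split
    · rename_i h; have : (Y ω)⁻¹ < 0 := inv_lt_zero.mpr h; linarith
    · exact one_pos
  · -- |Z * Y| ≤ 1
    simp only [hZdef]
    split
    · rename_i h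
      rw [neg_mul, inv_mul_cancel₀ (ne_of_lt h)]
      simp
    · rename_i h
      rw [one_mul, abs_le]
      push_neg at h
      constructor
      · linarith
      · have := hV1 ω; simp only [hYdef]; linarith
  · -- ZY ∉ A0
    intro hmem
    have h1 := hmem 1 one_pos
    have hsub : {ω | V ω < 1 - α} ⊆ {ω | Z ω * Y ω ≤ -1} := by
      intro ω hω
      simp only [Set.mem_setOf_eq] at hω ⊢
      have hYneg : Y ω < 0 := by simp only [hYdef]; linarith
      simp only [hZdef, if_pos hYneg, neg_mul, inv_mul_cancel₀ (ne_of_lt hYneg), le_refl]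
    have hmono : ENNReal.ofReal (1 - α) ≤ μ {ω | Z ω * Y ω ≤ -1} := by
      rw [← hlt]; exact measure_mono hsub
    have := ENNReal.toReal_mono (measure_ne_top μ _) hmono
    rw [ENNReal.toReal_ofReal (by linarith)] at this
    simp only [Set.mem_setOf_eq] at h1
    linarith
end

section
/- The set A^+_α = {X : P(X < 0) ≤ 1-α} is closed under convergence in probability: if X_n ∈ A^+_α for all n and X_n → X in probability, then X ∈ A^+_α. -/
/-!
For `b < a`, `{g < b} ⊆ {f i < a} ∪ {a - b ≤ dist (f i) g}`, and the measure of the second set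
tends to `0` under convergence in measure; so `μ {g < b} ≤ c` whenever eventually
`μ {f i < a} ≤ c`. Letting `b ↑ a`, continuity of `μ` along increasing unions gives
`μ {g < a} ≤ c`.
-/

open MeasureTheory

variable {Ω : Type*} [MeasurableSpace Ω]

open Filter Topology
open scoped ENNReal

lemma setOf_lt_subset_setOf_lt_union_setOf_le_dist {β : Type*} (f g : β → ℝ) (a b : ℝ) :
    {x | g x < b} ⊆ {x | f x < a} ∪ {x | a - b ≤ dist (f x) (g x)} := by
  intro x (hx : g x < b)
  rcases lt_or_ge (f x) a with h | h
  · exact Or.inl h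
  · exact Or.inr (by rw [Set.mem_ofPred_eq, Real.dist_eq]; linarith [le_abs_self (f x - g x)])

namespace MeasureTheory.TendstoInMeasure

variable {μ : Measure Ω} {ι : Type*} {l : Filter ι} [l.NeBot] {f : ι → Ω → ℝ} {g : Ω → ℝ}
  {a : ℝ} {c : ℝ≥0∞}

lemma measure_lt_le_of_lt (hfg : TendstoInMeasure μ f l g)
    (hf : ∀ᶠ i in l, μ {ω | f i ω < a} ≤ c) {b : ℝ} (hba : b < a) :
    μ {ω | g ω < b} ≤ c := by
  have hdist : Tendsto (fun i => c + μ {ω | a - b ≤ dist (f i ω) (g ω)}) l (𝓝 c) := by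
    simpa using (tendstoInMeasure_iff_dist.1 hfg (a - b) (sub_pos.2 hba)).const_add c
  refine ge_of_tendsto hdist (hf.mono fun i hi => ?_)
  calc μ {ω | g ω < b}
      ≤ μ {ω | f i ω < a} + μ {ω | a - b ≤ dist (f i ω) (g ω)} :=
        (measure_mono (setOf_lt_subset_setOf_lt_union_setOf_le_dist (f i) g a b)).trans
          (measure_union_le _ _)
    _ ≤ c + μ {ω | a - b ≤ dist (f i ω) (g ω)} := by gcongr

lemma measure_lt_le (hfg : TendstoInMeasure μ f l g)
    (hf : ∀ᶠ i in l, μ {ω | f i ω < a} ≤ c) :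
    μ {ω | g ω < a} ≤ c := by
  obtain ⟨u, hu_mono, hu_lt, hu_lim⟩ := exists_seq_strictMono_tendsto a
  have hunion : {ω | g ω < a} = ⋃ n, {ω | g ω < u n} := by
    ext ω
    simp only [Set.mem_ofPred_eq, Set.mem_iUnion]
    exact ⟨fun h => (hu_lim.eventually (lt_mem_nhds h)).exists,
      fun ⟨n, hn⟩ => hn.trans (hu_lt n)⟩
  have hmono : Monotone fun n => {ω | g ω < u n} :=
    fun m n hmn ω (hω : g ω < u m) => hω.trans_le (hu_mono.monotone hmn)
  rw [hunion]
  exact le_of_tendsto' (tendsto_measure_iUnion_atTop hmono)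
    fun n => hfg.measure_lt_le_of_lt hf (hu_lt n)

end MeasureTheory.TendstoInMeasure

theorem stmt_13_general (μ : Measure Ω) [IsProbabilityMeasure μ]
    (α : ℝ)
    (Xn : ℕ → Ω → ℝ) (X : Ω → ℝ)
    (hmem : ∀ n, (μ {ω | Xn n ω < 0}).toReal ≤ 1 - α)
    (hconv : TendstoInMeasure μ Xn Filter.atTop X) :
    (μ {ω | X ω < 0}).toReal ≤ 1 - α := by
  have h_nonneg : 0 ≤ 1 - α := ENNReal.toReal_nonneg.trans (hmem 0)
  have hmem' : ∀ n, μ {ω | Xn n ω < 0} ≤ ENNReal.ofReal (1 - α) := fun n =>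
    (ENNReal.le_ofReal_iff_toReal_le (measure_ne_top _ _) h_nonneg).2 (hmem n)
  exact ENNReal.toReal_le_of_le_ofReal h_nonneg (hconv.measure_lt_le (.of_forall hmem'))

/-- `A⁺_α = {X : P(X < 0) ≤ 1 - α}` is closed under convergence in probability. -/
theorem stmt_13 (μ : Measure Ω) [IsProbabilityMeasure μ]
    (α : ℝ) (hα : α ∈ Set.Icc (0 : ℝ) 1)
    (Xn : ℕ → Ω → ℝ) (X : Ω → ℝ)
    (hmem : ∀ n, (μ {ω | Xn n ω < 0}).toReal ≤ 1 - α)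
    (hconv : TendstoInMeasure μ Xn Filter.atTop X) :
    (μ {ω | X ω < 0}).toReal ≤ 1 - α :=
  stmt_13_general μ α Xn X hmem hconv
end

section
/- Let (Ω,F,P) be atomless and α ∈ [0,1). For every X with P(X < 0) ≤ 1-α, there exists a sequence (X_k) of random variables with P(X_k < 0) < 1-α for each k such that X_k → X in probability. Consequently, the closure of A^-_α = {X : P(X < 0) < 1-α} under convergence in probability is A^+_α = {X : P(X < 0) ≤ 1-α}. -/
/-!
If `Xₖ → X` in probability, then `{X < -ε}` lies in `{Xₖ < 0}` up to the event `|Xₖ - X| ≥ ε`,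
so `P(X < -ε) ≤ 1 - α` for every `ε > 0`; letting `ε ↓ 0` gives `P(X < 0) ≤ 1 - α`.
Conversely, when `P(X < 0) = 1 - α > 0`, atomlessness yields events `Aₖ ⊆ {X < 0}` with
`0 < P(Aₖ) → 0`; setting `Xₖ = 0` on `Aₖ` and `Xₖ = X` elsewhere gives
`P(Xₖ < 0) = P(X < 0) - P(Aₖ) < 1 - α` and `Xₖ → X` in probability.
-/

open MeasureTheory Set Filter Topology

variable {Ω : Type*} [MeasurableSpace Ω]

section ConvergenceInMeasure

variable {μ : Measure Ω} [IsFiniteMeasure μ]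

theorem tendstoInMeasure_of_eqOn_compl {ι E : Type*} [PseudoMetricSpace E] {l : Filter ι}
    {Y : ι → Ω → E} {X : Ω → E} {A : ι → Set Ω} (hYX : ∀ i, EqOn (Y i) X (A i)ᶜ)
    (hA : Tendsto (fun i => μ.real (A i)) l (𝓝 0)) : TendstoInMeasure μ Y l X := by
  rw [tendstoInMeasure_iff_measureReal_dist]
  intro ε hε
  refine squeeze_zero (fun _ => measureReal_nonneg) (fun i => measureReal_mono ?_) hA
  intro ω hω
  by_contra hωA
  rw [mem_ofPred_eq, hYX i hωA, dist_self] at hω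
  exact hε.not_ge hω

theorem measureReal_lt_le_of_tendstoInMeasure {Y : ℕ → Ω → ℝ} {X : Ω → ℝ} {c b : ℝ}
    (hYX : TendstoInMeasure μ Y atTop X) (hb : ∀ k, μ.real {ω | Y k ω < c} ≤ b) :
    μ.real {ω | X ω < c} ≤ b := by
  have below : ∀ ε > 0, μ.real {ω | X ω < c - ε} ≤ b := by
    intro ε hε
    have hsplit : ∀ k, μ.real {ω | X ω < c - ε} ≤ b + μ.real {ω | ε ≤ dist (Y k ω) (X ω)} := by
      intro k
      calc μ.real {ω | X ω < c - ε}
          ≤ μ.real ({ω | Y k ω < c} ∪ {ω | ε ≤ dist (Y k ω) (X ω)}) := by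
            refine measureReal_mono fun ω (hω : X ω < c - ε) => ?_
            rcases lt_or_ge (dist (Y k ω) (X ω)) ε with hclose | hfar
            · rw [Real.dist_eq] at hclose
              exact Or.inl (by linarith [(abs_lt.1 hclose).2] : Y k ω < c)
            · exact Or.inr hfar
        _ ≤ μ.real {ω | Y k ω < c} + μ.real {ω | ε ≤ dist (Y k ω) (X ω)} :=
            measureReal_union_le _ _
        _ ≤ b + μ.real {ω | ε ≤ dist (Y k ω) (X ω)} := by gcongr; exact hb k
    have hlim := ((tendstoInMeasure_iff_measureReal_dist.1 hYX) ε hε).const_add b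
    rw [add_zero] at hlim
    exact ge_of_tendsto' hlim hsplit
  have hmono : Monotone fun n : ℕ => {ω | X ω < c - 1 / (n + 1)} := by
    intro n m hnm ω (hω : X ω < c - 1 / (n + 1))
    exact hω.trans_le (by gcongr)
  have hunion : ⋃ n : ℕ, {ω | X ω < c - 1 / (n + 1)} = {ω | X ω < c} := by
    ext ω
    simp only [mem_iUnion, mem_ofPred_eq]
    refine ⟨fun ⟨n, hn⟩ => hn.trans (by linarith [Nat.one_div_pos_of_nat (α := ℝ) (n := n)]),
      fun h => ?_⟩
    obtain ⟨n, hn⟩ := exists_nat_one_div_lt (sub_pos.2 h)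
    exact ⟨n, by linarith⟩
  have hlim := (ENNReal.tendsto_toReal (measure_ne_top μ _)).comp
    (tendsto_measure_iUnion_atTop hmono)
  rw [hunion] at hlim
  exact le_of_tendsto' hlim fun n => below _ Nat.one_div_pos_of_nat

end ConvergenceInMeasure

section UniformRandomVariable

variable {μ : Measure Ω} {U : Ω → ℝ}

theorem measure_preimage_of_map_eq_uniform (hU : Measurable U)
    (hUd : μ.map U = volume.restrict (Icc (0 : ℝ) 1)) {s : Set ℝ} (hs : MeasurableSet s) :
    μ (U ⁻¹' s) = volume (s ∩ Icc 0 1) := by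
  rw [← Measure.map_apply hU hs, hUd, Measure.restrict_apply hs]

theorem measureReal_inter_preimage_Iic_le_add [IsFiniteMeasure μ] (hU : Measurable U)
    (hUd : μ.map U = volume.restrict (Icc (0 : ℝ) 1)) (S : Set Ω) {s t : ℝ} (hst : s ≤ t) :
    μ.real (S ∩ U ⁻¹' Iic t) ≤ μ.real (S ∩ U ⁻¹' Iic s) + (t - s) := by
  calc μ.real (S ∩ U ⁻¹' Iic t) ≤ μ.real ((S ∩ U ⁻¹' Iic s) ∪ U ⁻¹' Ioc s t) := by
        refine measureReal_mono fun ω ⟨hωS, hωt⟩ => ?_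
        by_cases hωs : U ω ≤ s
        exacts [Or.inl ⟨hωS, hωs⟩, Or.inr ⟨not_le.1 hωs, hωt⟩]
    _ ≤ μ.real (S ∩ U ⁻¹' Iic s) + μ.real (U ⁻¹' Ioc s t) := measureReal_union_le _ _
    _ ≤ μ.real (S ∩ U ⁻¹' Iic s) + (t - s) := by
        gcongr
        rw [measureReal_def, measure_preimage_of_map_eq_uniform hU hUd measurableSet_Ioc,
          ← measureReal_def]
        calc volume.real (Ioc s t ∩ Icc 0 1) ≤ volume.real (Ioc s t) :=
              measureReal_mono inter_subset_left measure_Ioc_lt_top.ne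
          _ = t - s := by rw [Real.volume_real_Ioc_of_le hst]

theorem continuous_measureReal_inter_preimage_Iic [IsFiniteMeasure μ] (hU : Measurable U)
    (hUd : μ.map U = volume.restrict (Icc (0 : ℝ) 1)) (S : Set Ω) :
    Continuous fun t => μ.real (S ∩ U ⁻¹' Iic t) := by
  refine (LipschitzWith.of_le_add fun t s => ?_).continuous
  rcases le_total s t with hst | hts
  · simpa [Real.dist_eq, abs_of_nonneg (sub_nonneg.2 hst)]
      using measureReal_inter_preimage_Iic_le_add hU hUd S hst
  · exact le_add_of_le_of_nonneg (measureReal_mono (inter_subset_inter_right _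
      (preimage_mono (Iic_subset_Iic.2 hts)))) dist_nonneg

/-- Sierpiński's intermediate value property, by the intermediate value theorem for
`t ↦ μ (S ∩ {U ≤ t})`. -/
theorem exists_subset_measureReal_eq_of_map_eq_uniform [IsFiniteMeasure μ] (hU : Measurable U)
    (hUd : μ.map U = volume.restrict (Icc (0 : ℝ) 1)) {S : Set Ω} (hS : MeasurableSet S)
    {c : ℝ} (hc : c ∈ Icc 0 (μ.real S)) : ∃ A ⊆ S, MeasurableSet A ∧ μ.real A = c := by
  have h_zero : μ.real (S ∩ U ⁻¹' Iic 0) = 0 := by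
    refine measureReal_mono_null inter_subset_right ?_
    rw [measureReal_eq_zero_iff, measure_preimage_of_map_eq_uniform hU hUd measurableSet_Iic]
    exact measure_mono_null (fun x ⟨h0, h1⟩ => le_antisymm h0 h1.1) (measure_singleton 0)
  have h_one : μ.real (S ∩ U ⁻¹' Iic 1) = μ.real S := by
    rw [measureReal_def, measure_inter_conull, ← measureReal_def]
    rw [← preimage_compl, compl_Iic, measure_preimage_of_map_eq_uniform hU hUd measurableSet_Ioi]
    exact measure_mono_null (fun x ⟨h1, h2⟩ => h2.2.not_gt h1) measure_empty
  obtain ⟨t, -, ht⟩ := intermediate_value_Icc zero_le_one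
    (continuous_measureReal_inter_preimage_Iic hU hUd S).continuousOn
    (by rwa [h_zero, h_one])
  exact ⟨_, inter_subset_left, hS.inter (hU measurableSet_Iic), ht⟩

theorem exists_tendstoInMeasure_of_measureReal_lt_pos [IsFiniteMeasure μ] (hU : Measurable U)
    (hUd : μ.map U = volume.restrict (Icc (0 : ℝ) 1)) {X : Ω → ℝ} (hX : Measurable X) {c : ℝ}
    (hpos : 0 < μ.real {ω | X ω < c}) :
    ∃ Y : ℕ → Ω → ℝ,
      (∀ k, Measurable (Y k) ∧ μ.real {ω | Y k ω < c} < μ.real {ω | X ω < c}) ∧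
      TendstoInMeasure μ Y atTop X := by
  classical
  set S := {ω | X ω < c}
  have hS : MeasurableSet S := measurableSet_lt hX measurable_const
  choose A hAS hA hμA using fun k : ℕ =>
    exists_subset_measureReal_eq_of_map_eq_uniform hU hUd hS (c := μ.real S / (k + 1))
      ⟨by positivity, div_le_self hpos.le (le_add_of_nonneg_left k.cast_nonneg)⟩
  have hneg : ∀ k, {ω | (A k).piecewise (fun _ => c) X ω < c} = S \ A k := by
    intro k
    ext ω
    by_cases hω : ω ∈ A k <;> simp [hω, S]
  refine ⟨fun k => (A k).piecewise (fun _ => c) X, fun k => ⟨?_, ?_⟩, ?_⟩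
  · exact Measurable.piecewise (hA k) measurable_const hX
  · rw [hneg, measureReal_sdiff (hAS k) (hA k), hμA k]
    exact sub_lt_self _ (by positivity)
  · refine tendstoInMeasure_of_eqOn_compl (fun k ω hω => piecewise_eq_of_notMem _ _ _ hω) ?_
    simp_rw [hμA]
    simpa only [mul_one_div, mul_zero]
      using tendsto_one_div_add_atTop_nhds_zero_nat.const_mul (μ.real S)

end UniformRandomVariable

/-- On an atomless probability space (one supporting a uniformly distributed random
variable `U`), every member of `A⁺_α` is the limit in probability of a sequence from
`A⁻_α`; consequently the closure of `A⁻_α` under convergence in probability is `A⁺_α`. -/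
theorem stmt_14 (μ : Measure Ω) [IsProbabilityMeasure μ]
    (U : Ω → ℝ) (hU : Measurable U)
    (hUd : μ.map U = volume.restrict (Set.Icc (0 : ℝ) 1))
    (α : ℝ) (hα : α ∈ Set.Ico (0 : ℝ) 1) :
    (∀ X : Ω → ℝ, Measurable X → (μ {ω | X ω < 0}).toReal ≤ 1 - α →
      ∃ Xk : ℕ → Ω → ℝ,
        (∀ k, Measurable (Xk k) ∧ (μ {ω | Xk k ω < 0}).toReal < 1 - α) ∧
        TendstoInMeasure μ Xk Filter.atTop X) ∧
    ({X : Ω → ℝ | Measurable X ∧ ∃ Xk : ℕ → Ω → ℝ,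
        (∀ k, Measurable (Xk k) ∧ (μ {ω | Xk k ω < 0}).toReal < 1 - α) ∧
        TendstoInMeasure μ Xk Filter.atTop X}
      = {X : Ω → ℝ | Measurable X ∧ (μ {ω | X ω < 0}).toReal ≤ 1 - α}) := by
  have approx : ∀ X : Ω → ℝ, Measurable X → μ.real {ω | X ω < 0} ≤ 1 - α →
      ∃ Xk : ℕ → Ω → ℝ, (∀ k, Measurable (Xk k) ∧ μ.real {ω | Xk k ω < 0} < 1 - α) ∧
        TendstoInMeasure μ Xk atTop X := by
    intro X hX hle
    rcases hle.lt_or_eq with hlt | heq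
    · exact ⟨fun _ => X, fun _ => ⟨hX, hlt⟩, tendstoInMeasure_of_tendsto_ae
        (fun _ => hX.aestronglyMeasurable) (ae_of_all _ fun _ => tendsto_const_nhds)⟩
    · obtain ⟨Xk, hXk, hlim⟩ :=
        exists_tendstoInMeasure_of_measureReal_lt_pos hU hUd hX (heq ▸ sub_pos.2 hα.2)
      exact ⟨Xk, fun k => ⟨(hXk k).1, heq ▸ (hXk k).2⟩, hlim⟩
  refine ⟨approx, Set.ext fun X => ⟨?_, ?_⟩⟩
  · rintro ⟨hX, Xk, hXk, hlim⟩
    exact ⟨hX, measureReal_lt_le_of_tendstoInMeasure hlim fun k => (hXk k).2.le⟩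
  · rintro ⟨hX, hle⟩
    exact ⟨hX, approx X hX hle⟩
end

section
/- Let (Ω,F,P) be atomless, and let A be a surplus-invariant, law-invariant, conic, and truncation-closed acceptance set of random variables. Define α := 1 - sup_{X∈A} P(X < 0) (with α = 1 if A is empty). If α < 1 and there exists X ∈ A with P(X ≤ -ε) ≥ 1-α for some ε > 0, then A = A^+_α = {X : P(X < 0) ≤ 1-α}. -/
/-!
Take `X₀ ∈ A` and `ε > 0` with `P(X₀ ≤ -ε) ≥ 1 - α`. Surplus invariance puts `-ε · 1_{X₀ ≤ -ε}`
in `A`, and then law invariance and conicity put `-d · 1_E` in `A` for every `d > 0` and every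
event `E` with `P(E) = P(X₀ ≤ -ε)`. If `P(X < 0) ≤ 1 - α`, the uniform variable `U` lets us
enlarge `{X < 0}` to such an event `E`. The truncation of `X` at level `d` loses at most `d` on
`E` and nothing outside it, so it lies in `A` by surplus invariance, and truncation-closedness
gives `X ∈ A`. The reverse inclusion is the definition of `α` as a supremum.
-/

open MeasureTheory Set

section Uniform

variable {Ω : Type*} [MeasurableSpace Ω] {μ : Measure Ω} {U : Ω → ℝ}

lemma measure_preimage_Iic_of_map_eq_uniform (hU : Measurable U)
    (hUd : μ.map U = volume.restrict (Icc 0 1)) {r : ℝ} (h1 : r ≤ 1) :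
    μ (U ⁻¹' Iic r) = ENNReal.ofReal r := by
  have hr : Iic r ∩ Icc 0 1 = Icc 0 r := by
    ext x
    simp only [mem_inter_iff, mem_Iic, mem_Icc]
    constructor
    · rintro ⟨hxr, hx0, -⟩
      exact ⟨hx0, hxr⟩
    · rintro ⟨hx0, hxr⟩
      exact ⟨hxr, hx0, hxr.trans h1⟩
  rw [← Measure.map_apply hU measurableSet_Iic, hUd, Measure.restrict_apply measurableSet_Iic, hr,
    Real.volume_Icc, sub_zero]

lemma measure_preimage_Ioc_le_of_map_eq_uniform (hU : Measurable U)
    (hUd : μ.map U = volume.restrict (Icc 0 1)) (s t : ℝ) :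
    μ (U ⁻¹' Ioc s t) ≤ ENNReal.ofReal (t - s) := by
  rw [← Measure.map_apply hU measurableSet_Ioc, hUd, Measure.restrict_apply measurableSet_Ioc,
    ← Real.volume_Ioc]
  exact measure_mono inter_subset_left

lemma lipschitzWith_measure_union_preimage_Iic [IsFiniteMeasure μ] (hU : Measurable U)
    (hUd : μ.map U = volume.restrict (Icc 0 1)) (S : Set Ω) :
    LipschitzWith 1 fun t => (μ (S ∪ U ⁻¹' Iic t)).toReal := by
  refine LipschitzWith.of_le_add fun t s => ?_
  have hsub : S ∪ U ⁻¹' Iic t ⊆ (S ∪ U ⁻¹' Iic s) ∪ U ⁻¹' Ioc s t := by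
    rw [union_assoc, ← preimage_union]
    exact union_subset_union_right _ (preimage_mono Iic_subset_Iic_union_Ioc)
  have hle : μ (S ∪ U ⁻¹' Iic t) ≤ μ (S ∪ U ⁻¹' Iic s) + ENNReal.ofReal (t - s) :=
    (measure_mono hsub).trans ((measure_union_le _ _).trans
      (add_le_add_right (measure_preimage_Ioc_le_of_map_eq_uniform hU hUd s t) _))
  calc (μ (S ∪ U ⁻¹' Iic t)).toReal
      ≤ (μ (S ∪ U ⁻¹' Iic s)).toReal + (ENNReal.ofReal (t - s)).toReal := by
        rw [← ENNReal.toReal_add (measure_ne_top _ _) ENNReal.ofReal_ne_top]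
        exact ENNReal.toReal_mono (by finiteness) hle
    _ ≤ (μ (S ∪ U ⁻¹' Iic s)).toReal + dist t s := by
        rw [ENNReal.toReal_ofReal', Real.dist_eq]
        gcongr
        exact max_le (le_abs_self _) (abs_nonneg _)

lemma exists_measurableSet_superset_measure_eq [IsProbabilityMeasure μ] (hU : Measurable U)
    (hUd : μ.map U = volume.restrict (Icc 0 1)) {S F : Set Ω} (hS : MeasurableSet S)
    (hSF : μ S ≤ μ F) : ∃ E, MeasurableSet E ∧ S ⊆ E ∧ μ E = μ F := by
  have hg0 : (μ (S ∪ U ⁻¹' Iic 0)).toReal ≤ (μ F).toReal := by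
    refine ENNReal.toReal_mono (measure_ne_top _ _) ((measure_union_le _ _).trans ?_)
    rwa [measure_preimage_Iic_of_map_eq_uniform hU hUd zero_le_one, ENNReal.ofReal_zero,
      add_zero]
  have hg1 : (μ F).toReal ≤ (μ (S ∪ U ⁻¹' Iic 1)).toReal := by
    refine ENNReal.toReal_mono (measure_ne_top _ _) (prob_le_one.trans ?_)
    rw [← ENNReal.ofReal_one, ← measure_preimage_Iic_of_map_eq_uniform hU hUd le_rfl]
    exact measure_mono subset_union_right
  obtain ⟨t, -, ht⟩ := intermediate_value_Icc zero_le_one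
    (lipschitzWith_measure_union_preimage_Iic hU hUd S).continuous.continuousOn ⟨hg0, hg1⟩
  exact ⟨S ∪ U ⁻¹' Iic t, hS.union (hU measurableSet_Iic), subset_union_left,
    (ENNReal.toReal_eq_toReal_iff' (measure_ne_top _ _) (measure_ne_top _ _)).1 ht⟩

end Uniform

section AcceptanceSet

variable {Ω : Type*}

def IsConic (𝒳 A : Set (Ω → ℝ)) : Prop :=
  ∀ X ∈ A, ∀ c : ℝ, 0 < c → (fun ω => c * X ω) ∈ 𝒳 → (fun ω => c * X ω) ∈ A

def TruncationClosed (𝒳 A : Set (Ω → ℝ)) : Prop :=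
  ∀ X ∈ 𝒳, (∀ d : ℝ, 0 < d → (fun ω => min (max (-d) (X ω)) d) ∈ A) → X ∈ A

def SurplusInvariant [MeasurableSpace Ω] (μ : Measure Ω) (𝒳 A : Set (Ω → ℝ)) : Prop :=
  ∀ X ∈ A, ∀ Y ∈ 𝒳, (∀ᵐ ω ∂μ, max (-(Y ω)) 0 ≤ max (-(X ω)) 0) → Y ∈ A

def LawInvariant [MeasurableSpace Ω] (μ : Measure Ω) (𝒳 A : Set (Ω → ℝ)) : Prop :=
  ∀ X ∈ A, ∀ Y ∈ 𝒳, μ.map Y = μ.map X → Y ∈ A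

variable {𝒳 A : Set (Ω → ℝ)}

lemma IsConic.indicator_mem (hCon : IsConic 𝒳 A) {E : Set Ω} {ε d : ℝ} (hε : 0 < ε)
    (hd : 0 < d) (hZ : (E.indicator fun _ => -ε) ∈ A) (hmem : (E.indicator fun _ => -d) ∈ 𝒳) :
    (E.indicator fun _ => -d) ∈ A := by
  have hscale : (fun ω => d / ε * E.indicator (fun _ => -ε) ω) = E.indicator fun _ => -d := by
    funext ω
    by_cases h : ω ∈ E
    · simp only [indicator_of_mem h]
      field_simp
    · simp [indicator_of_notMem h]
  simpa only [hscale] using hCon _ hZ (d / ε) (div_pos hd hε) (hscale ▸ hmem)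

variable [MeasurableSpace Ω] {μ : Measure Ω}

lemma indicator_const_mem_of_bounded_mem
    (h𝒳b : ∀ X : Ω → ℝ, Measurable X → (∃ C : ℝ, ∀ ω, |X ω| ≤ C) → X ∈ 𝒳)
    {E : Set Ω} (hE : MeasurableSet E) (a : ℝ) : (E.indicator fun _ => a) ∈ 𝒳 :=
  h𝒳b _ (measurable_const.indicator hE) ⟨|a|, fun ω => by by_cases h : ω ∈ E <;> simp [h]⟩

lemma truncation_mem_of_bounded_mem
    (h𝒳b : ∀ X : Ω → ℝ, Measurable X → (∃ C : ℝ, ∀ ω, |X ω| ≤ C) → X ∈ 𝒳)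
    {X : Ω → ℝ} (hX : Measurable X) {d : ℝ} (hd : 0 < d) :
    (fun ω => min (max (-d) (X ω)) d) ∈ 𝒳 :=
  h𝒳b _ ((measurable_const.max hX).min measurable_const)
    ⟨d, fun ω => abs_le.2 ⟨le_min (le_max_left _ _) (by linarith), min_le_right _ _⟩⟩

lemma SurplusInvariant.indicator_mem (hSI : SurplusInvariant μ 𝒳 A) {X : Ω → ℝ} (hX : X ∈ A)
    {E : Set Ω} {ε : ℝ} (hXE : ∀ ω ∈ E, X ω ≤ -ε) (hmem : (E.indicator fun _ => -ε) ∈ 𝒳) :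
    (E.indicator fun _ => -ε) ∈ A := by
  refine hSI X hX _ hmem (Filter.Eventually.of_forall fun ω => ?_)
  by_cases h : ω ∈ E
  · simp only [indicator_of_mem h, neg_neg]
    exact max_le_max_right 0 (by linarith [hXE ω h])
  · simp [indicator_of_notMem h]

lemma SurplusInvariant.mem_of_indicator_mem (hSI : SurplusInvariant μ 𝒳 A) {E : Set Ω} {d : ℝ}
    (hW : (E.indicator fun _ => -d) ∈ A) {Y : Ω → ℝ} (hY : Y ∈ 𝒳) (hYd : ∀ ω, -d ≤ Y ω)
    (hYE : ∀ ω ∉ E, 0 ≤ Y ω) : Y ∈ A := by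
  refine hSI _ hW Y hY (Filter.Eventually.of_forall fun ω => ?_)
  by_cases h : ω ∈ E
  · simp only [indicator_of_mem h, neg_neg]
    exact max_le_max_right 0 (by linarith [hYd ω])
  · simp [indicator_of_notMem h, hYE ω h]

lemma map_indicator_const_eq_of_measure_eq [IsFiniteMeasure μ] {M : Type*} [Zero M]
    [MeasurableSpace M] {E F : Set Ω} (hE : MeasurableSet E) (hF : MeasurableSet F)
    (hEF : μ E = μ F) (a : M) :
    μ.map (E.indicator fun _ => a) = μ.map (F.indicator fun _ => a) := by
  classical
  have hc : μ Eᶜ = μ Fᶜ := by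
    rw [measure_compl hE (measure_ne_top μ E), measure_compl hF (measure_ne_top μ F), hEF]
  ext s hs
  rw [Measure.map_apply (measurable_const.indicator hE) hs,
    Measure.map_apply (measurable_const.indicator hF) hs,
    indicator_const_preimage_eq_union, indicator_const_preimage_eq_union]
  split_ifs <;> simp [hEF, hc]

lemma LawInvariant.indicator_mem [IsFiniteMeasure μ] (hLI : LawInvariant μ 𝒳 A) {E F : Set Ω}
    {a : ℝ} (hF : (F.indicator fun _ => a) ∈ A) (hEm : MeasurableSet E) (hFm : MeasurableSet F)
    (hEF : μ E = μ F) (hmem : (E.indicator fun _ => a) ∈ 𝒳) : (E.indicator fun _ => a) ∈ A :=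
  hLI _ hF _ hmem (map_indicator_const_eq_of_measure_eq hEm hFm hEF a)

theorem mem_of_measure_lt_zero_le [IsProbabilityMeasure μ] {U : Ω → ℝ} (hU : Measurable U)
    (hUd : μ.map U = volume.restrict (Icc 0 1))
    (h𝒳m : ∀ X ∈ 𝒳, Measurable X)
    (h𝒳b : ∀ X : Ω → ℝ, Measurable X → (∃ C : ℝ, ∀ ω, |X ω| ≤ C) → X ∈ 𝒳)
    (hSI : SurplusInvariant μ 𝒳 A) (hLI : LawInvariant μ 𝒳 A) (hCon : IsConic 𝒳 A)
    (hTC : TruncationClosed 𝒳 A) {X₀ : Ω → ℝ} (hX₀ : X₀ ∈ A) (hX₀m : Measurable X₀) {ε : ℝ}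
    (hε : 0 < ε) {X : Ω → ℝ} (hX : X ∈ 𝒳) (hle : μ {ω | X ω < 0} ≤ μ {ω | X₀ ω ≤ -ε}) :
    X ∈ A := by
  have hE₀ : MeasurableSet {ω | X₀ ω ≤ -ε} := measurableSet_le hX₀m measurable_const
  obtain ⟨E, hE, hXE, hμE⟩ := exists_measurableSet_superset_measure_eq hU hUd
    (measurableSet_lt (h𝒳m X hX) measurable_const) hle
  have hZ : ({ω | X₀ ω ≤ -ε}.indicator fun _ => -ε) ∈ A :=
    hSI.indicator_mem hX₀ (fun _ hω => hω) (indicator_const_mem_of_bounded_mem h𝒳b hE₀ _)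
  refine hTC X hX fun d hd => ?_
  have hW : (E.indicator fun _ => -d) ∈ A :=
    hLI.indicator_mem (hCon.indicator_mem hε hd hZ (indicator_const_mem_of_bounded_mem h𝒳b hE₀ _))
      hE hE₀ hμE (indicator_const_mem_of_bounded_mem h𝒳b hE _)
  refine hSI.mem_of_indicator_mem hW (truncation_mem_of_bounded_mem h𝒳b (h𝒳m X hX) hd)
    (fun ω => le_min (le_max_left _ _) (by linarith)) fun ω hω => ?_
  exact le_min (le_max_of_le_right (not_lt.1 fun h => hω (hXE h))) hd.le

end AcceptanceSet

variable {Ω : Type*} [MeasurableSpace Ω]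

theorem stmt_16_general (μ : Measure Ω) [IsProbabilityMeasure μ]
    (U : Ω → ℝ) (hU : Measurable U)
    (hUd : μ.map U = volume.restrict (Set.Icc (0 : ℝ) 1))
    (𝒳 A : Set (Ω → ℝ))
    (h𝒳m : ∀ X ∈ 𝒳, Measurable X)
    (h𝒳b : ∀ X : Ω → ℝ, Measurable X → (∃ C : ℝ, ∀ ω, |X ω| ≤ C) → X ∈ 𝒳)
    (hA𝒳 : A ⊆ 𝒳)
    (hSI : ∀ X ∈ A, ∀ Y ∈ 𝒳,
      (∀ᵐ ω ∂μ, max (-(Y ω)) 0 ≤ max (-(X ω)) 0) → Y ∈ A)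
    (hLI : ∀ X ∈ A, ∀ Y ∈ 𝒳, μ.map Y = μ.map X → Y ∈ A)
    (hCon : ∀ X ∈ A, ∀ c : ℝ, 0 < c →
      (fun ω => c * X ω) ∈ 𝒳 → (fun ω => c * X ω) ∈ A)
    (hTC : ∀ X ∈ 𝒳,
      (∀ d : ℝ, 0 < d → (fun ω => min (max (-d) (X ω)) d) ∈ A) → X ∈ A)
    (α : ℝ)
    (hαdef : α = 1 - sSup ((fun X : Ω → ℝ => (μ {ω | X ω < 0}).toReal) '' A))
    (hbad : ∃ X ∈ A, ∃ ε : ℝ, 0 < ε ∧ 1 - α ≤ (μ {ω | X ω ≤ -ε}).toReal) :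
    A = {X | X ∈ 𝒳 ∧ (μ {ω | X ω < 0}).toReal ≤ 1 - α} := by
  obtain ⟨X₀, hX₀, ε, hε, hX₀α⟩ := hbad
  have hsup : sSup ((fun X : Ω → ℝ => (μ {ω | X ω < 0}).toReal) '' A) = 1 - α := by linarith
  have hbdd : BddAbove ((fun X : Ω → ℝ => (μ {ω | X ω < 0}).toReal) '' A) :=
    ⟨1, forall_mem_image.2 fun _ _ => measureReal_le_one⟩
  ext X
  refine ⟨fun hX => ⟨hA𝒳 hX, hsup ▸ le_csSup hbdd (mem_image_of_mem _ hX)⟩, fun ⟨hX, hXα⟩ => ?_⟩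
  refine mem_of_measure_lt_zero_le hU hUd h𝒳m h𝒳b hSI hLI hCon hTC hX₀ (h𝒳m X₀ (hA𝒳 hX₀)) hε hX ?_
  exact (ENNReal.toReal_le_toReal (measure_ne_top _ _) (measure_ne_top _ _)).1 (hXα.trans hX₀α)

/-- If `A` is a surplus-invariant, law-invariant, conic, and truncation-closed acceptance
set on an atomless probability space (one supporting a uniform random variable `U`),
`α := 1 - sup_{X ∈ A} P(X < 0)` satisfies `α < 1`, and some `X ∈ A` has
`P(X ≤ -ε) ≥ 1 - α` for some `ε > 0`, then `A = A⁺_α = {X : P(X < 0) ≤ 1 - α}`. -/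
theorem stmt_16 (μ : Measure Ω) [IsProbabilityMeasure μ]
    (U : Ω → ℝ) (hU : Measurable U)
    (hUd : μ.map U = volume.restrict (Set.Icc (0 : ℝ) 1))
    (𝒳 A : Set (Ω → ℝ))
    (h𝒳m : ∀ X ∈ 𝒳, Measurable X)
    (h𝒳b : ∀ X : Ω → ℝ, Measurable X → (∃ C : ℝ, ∀ ω, |X ω| ≤ C) → X ∈ 𝒳)
    (hA𝒳 : A ⊆ 𝒳)
    (hSI : ∀ X ∈ A, ∀ Y ∈ 𝒳,
      (∀ᵐ ω ∂μ, max (-(Y ω)) 0 ≤ max (-(X ω)) 0) → Y ∈ A)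
    (hLI : ∀ X ∈ A, ∀ Y ∈ 𝒳, μ.map Y = μ.map X → Y ∈ A)
    (hCon : ∀ X ∈ A, ∀ c : ℝ, 0 < c →
      (fun ω => c * X ω) ∈ 𝒳 → (fun ω => c * X ω) ∈ A)
    (hTC : ∀ X ∈ 𝒳,
      (∀ d : ℝ, 0 < d → (fun ω => min (max (-d) (X ω)) d) ∈ A) → X ∈ A)
    (α : ℝ)
    (hαdef : α = 1 - sSup ((fun X : Ω → ℝ => (μ {ω | X ω < 0}).toReal) '' A))
    (hα1 : α < 1)
    (hbad : ∃ X ∈ A, ∃ ε : ℝ, 0 < ε ∧ 1 - α ≤ (μ {ω | X ω ≤ -ε}).toReal) :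
    A = {X | X ∈ 𝒳 ∧ (μ {ω | X ω < 0}).toReal ≤ 1 - α} :=
  stmt_16_general μ U hU hUd 𝒳 A h𝒳m h𝒳b hA𝒳 hSI hLI hCon hTC α hαdef hbad
end

section
/- Let (Ω,F,P) be atomless. A set A of random variables is surplus-invariant, law-invariant, num\'eraire-invariant, and truncation-closed if and only if there exists α ∈ [0,1] such that either A = {X : P(X<0) < 1-α} or A = {X : P(X<0) ≤ 1-α}. -/
open MeasureTheory

variable {Ω : Type*} [MeasurableSpace Ω]

namespace Stmt18Aux
open Set

variable {Ω : Type*} [MeasurableSpace Ω]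

open Classical in
noncomputable def ind (E : Set Ω) (ω : Ω) : ℝ := if ω ∈ E then -1 else 1

lemma ind_measurable {E : Set Ω} (hE : MeasurableSet E) : Measurable (ind E) := by
  classical
  unfold ind
  exact Measurable.ite hE measurable_const measurable_const

lemma ind_abs_le (E : Set Ω) (ω : Ω) : |ind E ω| ≤ 1 := by
  classical
  unfold ind; split_ifs <;> norm_num

lemma ind_neg_lt (E : Set Ω) (ω : Ω) : ind E ω < 0 ↔ ω ∈ E := by
  classical
  by_cases h : ω ∈ E <;> norm_num [ind, h]

lemma ind_set_lt (E : Set Ω) : {ω | ind E ω < 0} = E :=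
  Set.ext fun ω => ind_neg_lt E ω

lemma map_ind_eq (μ : Measure Ω) [IsProbabilityMeasure μ] {E F : Set Ω}
    (hE : MeasurableSet E) (hF : MeasurableSet F) (h : μ E = μ F) :
    μ.map (ind E) = μ.map (ind F) := by
  classical
  have key : ∀ (G : Set Ω), ∀ s : Set ℝ,
      ind G ⁻¹' s = (if (-1:ℝ) ∈ s then G else ∅) ∪ (if (1:ℝ) ∈ s then Gᶜ else ∅) := by
    intro G s
    ext ω
    by_cases hm : ω ∈ G <;> by_cases h1 : (-1:ℝ) ∈ s <;> by_cases h2 : (1:ℝ) ∈ s <;>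
      simp [ind, hm, h1, h2]
  have hcompl : μ Eᶜ = μ Fᶜ := by
    rw [measure_compl hE (measure_ne_top μ E), measure_compl hF (measure_ne_top μ F), h]
  ext s hs
  rw [Measure.map_apply (ind_measurable hE) hs, Measure.map_apply (ind_measurable hF) hs,
    key E s, key F s]
  split_ifs <;> simp [h, hcompl, Set.union_compl_self]

lemma ind_negpart_mono {E F : Set Ω} (h : E ⊆ F) (ω : Ω) :
    max (-(ind E ω)) 0 ≤ max (-(ind F ω)) 0 := by
  classical
  by_cases hω : ω ∈ E
  · simp [ind, hω, h hω]
  · rw [ind, if_neg hω]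
    exact max_le (le_trans (by norm_num) (le_max_right (-(ind F ω)) 0)) (le_max_right _ _)

lemma trunc_lt_zero_iff (x d : ℝ) (hd : 0 < d) : min (max (-d) x) d < 0 ↔ x < 0 := by
  constructor
  · intro h
    by_contra hx
    push_neg at hx
    have h1 : (0:ℝ) ≤ min (max (-d) x) d := le_min (le_trans hx (le_max_right _ _)) hd.le
    linarith
  · intro h
    have h1 : max (-d) x < 0 := max_lt (by linarith) h
    exact lt_of_le_of_lt (min_le_left _ _) h1

lemma trunc_neg_le (x d : ℝ) (hd : 0 < d) :
    max (-(min (max (-d) x) d)) 0 ≤ max (-x) 0 := by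
  apply max_le _ (le_max_right _ _)
  rcases le_total 0 x with h | h
  · have h1 : 0 ≤ min (max (-d) x) d := le_min (le_trans h (le_max_right _ _)) hd.le
    linarith [le_max_right (-x) (0:ℝ)]
  · have h1 : x ≤ min (max (-d) x) d := by
      have : min x d = x := min_eq_left (by linarith)
      calc x = min x d := this.symm
        _ ≤ min (max (-d) x) d := min_le_min (le_max_right _ _) le_rfl
    linarith [le_max_left (-x) (0:ℝ)]

lemma trunc_abs_le (x d : ℝ) (hd : 0 < d) : |min (max (-d) x) d| ≤ d :=
  abs_le.mpr ⟨le_min (le_max_left _ _) (by linarith), min_le_right _ _⟩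

lemma measure_U_lt (μ : Measure Ω) (U : Ω → ℝ) (hU : Measurable U)
    (hUd : μ.map U = volume.restrict (Set.Icc (0:ℝ) 1)) {p : ℝ} (hp0 : 0 ≤ p) (hp1 : p ≤ 1) :
    μ {ω | U ω < p} = ENNReal.ofReal p := by
  have h1 : {ω | U ω < p} = U ⁻¹' (Iio p) := rfl
  rw [h1, ← Measure.map_apply hU measurableSet_Iio, hUd,
    Measure.restrict_apply measurableSet_Iio]
  have h2 : Iio p ∩ Icc (0:ℝ) 1 = Ico 0 p := by
    ext x
    simp only [mem_inter_iff, mem_Iio, mem_Icc, mem_Ico]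
    constructor
    · rintro ⟨ha, hb, _⟩; exact ⟨hb, ha⟩
    · rintro ⟨ha, hb⟩; exact ⟨hb, ha, le_trans hb.le hp1⟩
  rw [h2, Real.volume_Ico, sub_zero]




lemma trunc_lt_zero_iff' (x d : ℝ) (hd : 0 < d) : min (max (-d) x) d < 0 ↔ x < 0 := by
  constructor
  · intro h
    by_contra hx
    push_neg at hx
    have h1 : (0:ℝ) ≤ min (max (-d) x) d := le_min (le_trans hx (le_max_right _ _)) hd.le
    linarith
  · intro h
    have h1 : max (-d) x < 0 := max_lt (by linarith) h
    exact lt_of_le_of_lt (min_le_left _ _) h1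

lemma threshold_props (μ : Measure Ω) [IsProbabilityMeasure μ]
    (𝒳 : Set (Ω → ℝ)) (h𝒳m : ∀ X ∈ 𝒳, Measurable X)
    (Q : ℝ → Prop) (hQmono : ∀ p q : ℝ, q ≤ p → Q p → Q q)
    (A : Set (Ω → ℝ)) (hA : A = {X | X ∈ 𝒳 ∧ Q ((μ {ω | X ω < 0}).toReal)}) :
    (∀ X ∈ A, ∀ Y ∈ 𝒳,
        (∀ᵐ ω ∂μ, max (-(Y ω)) 0 ≤ max (-(X ω)) 0) → Y ∈ A) ∧
      (∀ X ∈ A, ∀ Y ∈ 𝒳, μ.map Y = μ.map X → Y ∈ A) ∧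
      (∀ X ∈ A, ∀ Z : Ω → ℝ, Measurable Z → (∀ ω, 0 < Z ω) →
        (fun ω => Z ω * X ω) ∈ 𝒳 → (fun ω => Z ω * X ω) ∈ A) ∧
      (∀ X ∈ 𝒳,
        (∀ d : ℝ, 0 < d → (fun ω => min (max (-d) (X ω)) d) ∈ A) → X ∈ A) := by
  subst hA
  refine ⟨?_, ?_, ?_, ?_⟩
  · rintro X ⟨hX𝒳, hXQ⟩ Y hY𝒳 hae
    refine ⟨hY𝒳, hQmono _ _ ?_ hXQ⟩
    have hsub : {ω | Y ω < 0} ≤ᵐ[μ] {ω | X ω < 0} := by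
      filter_upwards [hae] with ω hω hY
      have hY' : Y ω < 0 := hY
      show X ω < 0
      by_contra hX
      push_neg at hX
      have h1 : max (-(X ω)) 0 = 0 := max_eq_right (by linarith)
      have h2 := le_max_left (-(Y ω)) (0:ℝ)
      linarith
    exact ENNReal.toReal_mono (measure_ne_top μ _) (measure_mono_ae hsub)
  · rintro X ⟨hX𝒳, hXQ⟩ Y hY𝒳 hmap
    refine ⟨hY𝒳, ?_⟩
    have heq : μ {ω | Y ω < 0} = μ {ω | X ω < 0} := by
      have h1 : μ {ω | Y ω < 0} = μ.map Y (Iio 0) :=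
        (Measure.map_apply (h𝒳m Y hY𝒳) measurableSet_Iio).symm
      have h2 : μ {ω | X ω < 0} = μ.map X (Iio 0) :=
        (Measure.map_apply (h𝒳m X hX𝒳) measurableSet_Iio).symm
      rw [h1, h2, hmap]
    rw [heq]; exact hXQ
  · rintro X ⟨hX𝒳, hXQ⟩ Z hZm hZpos hZX𝒳
    refine ⟨hZX𝒳, ?_⟩
    have heq : {ω | Z ω * X ω < 0} = {ω | X ω < 0} := by
      ext ω
      simp only [Set.mem_setOf_eq]
      constructor
      · intro h
        by_contra hx
        push_neg at hx
        exact absurd h (not_lt.mpr (mul_nonneg (hZpos ω).le hx))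
      · exact fun h => mul_neg_of_pos_of_neg (hZpos ω) h
    simp only [Set.mem_setOf_eq]
    rw [heq]; exact hXQ
  · rintro X hX𝒳 hd
    obtain ⟨h1𝒳, h1Q⟩ := hd 1 one_pos
    refine ⟨hX𝒳, ?_⟩
    have heq : {ω | min (max (-1:ℝ) (X ω)) 1 < 0} = {ω | X ω < 0} :=
      Set.ext fun ω => trunc_lt_zero_iff' _ _ one_pos
    simp only [Set.mem_setOf_eq] at h1Q ⊢
    rwa [heq] at h1Q



end Stmt18Aux

open Set Stmt18Aux

/-- On an atomless probability space (one supporting a uniform random variable `U`),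
a set `A` is surplus-invariant, law-invariant, numéraire-invariant, and
truncation-closed if and only if `A = A⁻_α` or `A = A⁺_α` for some `α ∈ [0,1]`. -/
theorem stmt_18 (μ : Measure Ω) [IsProbabilityMeasure μ]
    (U : Ω → ℝ) (hU : Measurable U)
    (hUd : μ.map U = volume.restrict (Set.Icc (0 : ℝ) 1))
    (𝒳 A : Set (Ω → ℝ))
    (h𝒳m : ∀ X ∈ 𝒳, Measurable X)
    (h𝒳b : ∀ X : Ω → ℝ, Measurable X → (∃ C : ℝ, ∀ ω, |X ω| ≤ C) → X ∈ 𝒳)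
    (hA𝒳 : A ⊆ 𝒳) :
    ((∀ X ∈ A, ∀ Y ∈ 𝒳,
        (∀ᵐ ω ∂μ, max (-(Y ω)) 0 ≤ max (-(X ω)) 0) → Y ∈ A) ∧
      (∀ X ∈ A, ∀ Y ∈ 𝒳, μ.map Y = μ.map X → Y ∈ A) ∧
      (∀ X ∈ A, ∀ Z : Ω → ℝ, Measurable Z → (∀ ω, 0 < Z ω) →
        (fun ω => Z ω * X ω) ∈ 𝒳 → (fun ω => Z ω * X ω) ∈ A) ∧
      (∀ X ∈ 𝒳,
        (∀ d : ℝ, 0 < d → (fun ω => min (max (-d) (X ω)) d) ∈ A) → X ∈ A)) ↔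
    (∃ α ∈ Set.Icc (0 : ℝ) 1,
      A = {X | X ∈ 𝒳 ∧ (μ {ω | X ω < 0}).toReal < 1 - α} ∨
      A = {X | X ∈ 𝒳 ∧ (μ {ω | X ω < 0}).toReal ≤ 1 - α}) := by
  constructor
  · rintro ⟨hsurp, hlaw, hnum, htrunc⟩
    classical
    -- basic facts
    have hmeasA : ∀ X ∈ A, Measurable X := fun X hX => h𝒳m X (hA𝒳 hX)
    have hmeasE : ∀ (X : Ω → ℝ), Measurable X → MeasurableSet {ω | X ω < 0} :=
      fun X hX => measurableSet_lt hX measurable_const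
    have hUset : ∀ p : ℝ, MeasurableSet {ω | U ω < p} :=
      fun p => measurableSet_lt hU measurable_const
    have hprobc : ∀ X : Ω → ℝ, (μ {ω | X ω < 0}).toReal ∈ Icc (0:ℝ) 1 := by
      intro X
      refine ⟨ENNReal.toReal_nonneg, ?_⟩
      calc (μ {ω | X ω < 0}).toReal
          ≤ (μ Set.univ).toReal :=
            ENNReal.toReal_mono (measure_ne_top μ _) (measure_mono (Set.subset_univ _))
        _ = 1 := by rw [measure_univ, ENNReal.toReal_one]
    have hSmem : ∀ p : ℝ, ind {ω | U ω < p} ∈ 𝒳 :=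
      fun p => h𝒳b _ (ind_measurable (hUset p)) ⟨1, ind_abs_le _⟩
    have hμU : ∀ p ∈ Icc (0:ℝ) 1, μ {ω | U ω < p} = ENNReal.ofReal p :=
      fun p hp => measure_U_lt μ U hU hUd hp.1 hp.2
    -- Step A : X ∈ A implies the canonical indicator is in A
    have hp_mem : ∀ X ∈ A, ind {ω | U ω < (μ {ω | X ω < 0}).toReal} ∈ A := by
      intro X hX
      have hXm := hmeasA X hX
      set X₁ : Ω → ℝ := fun ω => min (max (-1) (X ω)) 1 with hX₁def
      have hX₁m : Measurable X₁ :=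
        (Measurable.max measurable_const hXm).min measurable_const
      have hX₁𝒳 : X₁ ∈ 𝒳 := h𝒳b _ hX₁m ⟨1, fun ω => trunc_abs_le _ _ one_pos⟩
      have hX₁A : X₁ ∈ A :=
        hsurp X hX X₁ hX₁𝒳 (Filter.Eventually.of_forall fun ω => trunc_neg_le (X ω) 1 one_pos)
      have hltiff : ∀ ω, X₁ ω < 0 ↔ X ω < 0 := fun ω => trunc_lt_zero_iff (X ω) 1 one_pos
      -- numeraire invariance
      set Z : Ω → ℝ := fun ω => if X₁ ω < 0 then -(X₁ ω)⁻¹ else 1 with hZdef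
      have hZm : Measurable Z :=
        Measurable.ite (hmeasE X₁ hX₁m) hX₁m.inv.neg measurable_const
      have hZpos : ∀ ω, 0 < Z ω := by
        intro ω
        by_cases h : X₁ ω < 0
        · simp only [hZdef, if_pos h]
          exact neg_pos.mpr (inv_lt_zero.mpr h)
        · simp [hZdef, if_neg h]
      have hWval : ∀ ω, Z ω * X₁ ω = if X₁ ω < 0 then -1 else X₁ ω := by
        intro ω
        by_cases h : X₁ ω < 0
        · simp only [hZdef, if_pos h]
          rw [neg_mul, inv_mul_cancel₀ (ne_of_lt h)]
        · simp [hZdef, if_neg h]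
      have hWb : ∀ ω, |Z ω * X₁ ω| ≤ 1 := by
        intro ω
        rw [hWval ω]
        split_ifs with h
        · norm_num
        · exact trunc_abs_le _ _ one_pos
      have hW𝒳 : (fun ω => Z ω * X₁ ω) ∈ 𝒳 := h𝒳b _ (hZm.mul hX₁m) ⟨1, hWb⟩
      have hWA : (fun ω => Z ω * X₁ ω) ∈ A := hnum X₁ hX₁A Z hZm hZpos hW𝒳
      -- surplus invariance down to the indicator of {X < 0}
      have hY'𝒳 : ind {ω | X ω < 0} ∈ 𝒳 :=
        h𝒳b _ (ind_measurable (hmeasE X hXm)) ⟨1, ind_abs_le _⟩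
      have hY'A : ind {ω | X ω < 0} ∈ A := by
        refine hsurp _ hWA _ hY'𝒳 (Filter.Eventually.of_forall fun ω => ?_)
        show max (-(ind {ω | X ω < 0} ω)) 0 ≤ max (-(Z ω * X₁ ω)) 0
        by_cases h : X ω < 0
        · have h1 : X₁ ω < 0 := (hltiff ω).mpr h
          rw [hWval ω, if_pos h1, ind, if_pos (show ω ∈ {ω | X ω < 0} from h)]
        · rw [ind, if_neg (show ω ∉ {ω | X ω < 0} from h)]
          exact max_le (le_trans (by norm_num) (le_max_right (-(Z ω * X₁ ω)) 0))
            (le_max_right _ _)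
      -- law invariance to the uniform indicator
      set p : ℝ := (μ {ω | X ω < 0}).toReal with hpdef
      have hp01 : p ∈ Icc (0:ℝ) 1 := hprobc X
      have hμeq : μ {ω | U ω < p} = μ {ω | X ω < 0} := by
        rw [hμU p hp01, hpdef, ENNReal.ofReal_toReal (measure_ne_top μ _)]
      exact hlaw _ hY'A _ (hSmem p)
        (map_ind_eq μ (hUset p) (hmeasE X hXm) hμeq)
    -- Step C : reconstruction
    have hrecon : ∀ Y ∈ 𝒳, ind {ω | U ω < (μ {ω | Y ω < 0}).toReal} ∈ A → Y ∈ A := by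
      intro Y hY𝒳 hSA
      have hYm := h𝒳m Y hY𝒳
      set p : ℝ := (μ {ω | Y ω < 0}).toReal with hpdef
      have hp01 : p ∈ Icc (0:ℝ) 1 := hprobc Y
      have hμeq : μ {ω | Y ω < 0} = μ {ω | U ω < p} := by
        rw [hμU p hp01, hpdef, ENNReal.ofReal_toReal (measure_ne_top μ _)]
      have hY'𝒳 : ind {ω | Y ω < 0} ∈ 𝒳 :=
        h𝒳b _ (ind_measurable (hmeasE Y hYm)) ⟨1, ind_abs_le _⟩
      have hY'A : ind {ω | Y ω < 0} ∈ A :=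
        hlaw _ hSA _ hY'𝒳 (map_ind_eq μ (hmeasE Y hYm) (hUset p) hμeq)
      refine htrunc Y hY𝒳 fun d hd => ?_
      set Z : Ω → ℝ := fun ω => if Y ω < 0 then -(min (max (-d) (Y ω)) d) else 1 with hZdef
      have hZm : Measurable Z :=
        Measurable.ite (hmeasE Y hYm)
          ((Measurable.max measurable_const hYm).min measurable_const).neg measurable_const
      have hZpos : ∀ ω, 0 < Z ω := by
        intro ω
        by_cases h : Y ω < 0
        · simp only [hZdef, if_pos h]
          exact neg_pos.mpr ((trunc_lt_zero_iff (Y ω) d hd).mpr h)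
        · simp [hZdef, if_neg h]
      have hWval : ∀ ω, Z ω * ind {ω' | Y ω' < 0} ω =
          if Y ω < 0 then min (max (-d) (Y ω)) d else 1 := by
        intro ω
        by_cases h : Y ω < 0
        · rw [hZdef, ind]
          simp only [Set.mem_setOf_eq, if_pos h]
          ring
        · rw [hZdef, ind]
          simp only [Set.mem_setOf_eq, if_neg h]
          ring
      have hWb : ∀ ω, |Z ω * ind {ω' | Y ω' < 0} ω| ≤ max d 1 := by
        intro ω
        rw [hWval ω]
        split_ifs with h
        · exact le_trans (trunc_abs_le _ _ hd) (le_max_left _ _)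
        · simp
      have hW𝒳 : (fun ω => Z ω * ind {ω' | Y ω' < 0} ω) ∈ 𝒳 :=
        h𝒳b _ (hZm.mul (ind_measurable (hmeasE Y hYm))) ⟨max d 1, hWb⟩
      have hWA := hnum _ hY'A Z hZm hZpos hW𝒳
      have hYd𝒳 : (fun ω => min (max (-d) (Y ω)) d) ∈ 𝒳 :=
        h𝒳b _ ((Measurable.max measurable_const hYm).min measurable_const)
          ⟨d, fun ω => trunc_abs_le _ _ hd⟩
      refine hsurp _ hWA _ hYd𝒳 (Filter.Eventually.of_forall fun ω => ?_)
      show max (-(min (max (-d) (Y ω)) d)) 0 ≤ max (-(Z ω * ind {ω' | Y ω' < 0} ω)) 0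
      rw [hWval ω]
      by_cases h : Y ω < 0
      · rw [if_pos h]
      · rw [if_neg h]
        push_neg at h
        have h1 : 0 ≤ min (max (-d) (Y ω)) d :=
          le_min (le_trans h (le_max_right _ _)) hd.le
        exact max_le (le_trans (by linarith) (le_max_right (-(1:ℝ)) 0)) (le_max_right _ _)
    -- the set of thresholds
    by_cases hAe : A = ∅
    · refine ⟨1, ⟨zero_le_one, le_refl 1⟩, Or.inl ?_⟩
      rw [hAe]
      ext X
      simp only [Set.mem_empty_iff_false, Set.mem_setOf_eq, false_iff, not_and, not_lt]
      intro _
      norm_num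
    · obtain ⟨X₀, hX₀⟩ := Set.nonempty_iff_ne_empty.mpr hAe
      set T : Set ℝ := {p | p ∈ Icc (0:ℝ) 1 ∧ ind {ω | U ω < p} ∈ A} with hTdef
      have hTne : T.Nonempty := ⟨(μ {ω | X₀ ω < 0}).toReal, hprobc X₀, hp_mem X₀ hX₀⟩
      have hTbdd : BddAbove T := ⟨1, fun p hp => hp.1.2⟩
      set s : ℝ := sSup T with hsdef
      obtain ⟨p₀, hp₀⟩ := hTne
      have hs0 : 0 ≤ s := le_trans hp₀.1.1 (le_csSup hTbdd hp₀)
      have hs1 : s ≤ 1 := csSup_le ⟨p₀, hp₀⟩ fun p hp => hp.1.2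
      have hTmono : ∀ q ∈ Icc (0:ℝ) 1, ∀ p ∈ T, q ≤ p → q ∈ T := by
        intro q hq p hp hqp
        refine ⟨hq, hsurp _ hp.2 _ (hSmem q) (Filter.Eventually.of_forall fun ω => ?_)⟩
        exact ind_negpart_mono (fun ω (h : U ω < q) => lt_of_lt_of_le h hqp) ω
      have hchar : ∀ X, X ∈ A ↔ X ∈ 𝒳 ∧ (μ {ω | X ω < 0}).toReal ∈ T :=
        fun X => ⟨fun hX => ⟨hA𝒳 hX, hprobc X, hp_mem X hX⟩,
          fun h => hrecon X h.1 h.2.2⟩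
      by_cases hsT : s ∈ T
      · refine ⟨1 - s, ⟨by linarith, by linarith⟩, Or.inr ?_⟩
        ext X
        rw [hchar X]
        simp only [Set.mem_setOf_eq]
        constructor
        · rintro ⟨h𝒳, hT⟩
          have := le_csSup hTbdd hT
          exact ⟨h𝒳, by linarith⟩
        · rintro ⟨h𝒳, hle⟩
          exact ⟨h𝒳, hTmono _ (hprobc X) s hsT (by linarith)⟩
      · refine ⟨1 - s, ⟨by linarith, by linarith⟩, Or.inl ?_⟩
        ext X
        rw [hchar X]
        simp only [Set.mem_setOf_eq]
        constructor
        · rintro ⟨h𝒳, hT⟩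
          have hle := le_csSup hTbdd hT
          have hne : (μ {ω | X ω < 0}).toReal ≠ s := fun he => hsT (he ▸ hT)
          have := lt_of_le_of_ne hle hne
          exact ⟨h𝒳, by linarith⟩
        · rintro ⟨h𝒳, hlt⟩
          have hlt' : (μ {ω | X ω < 0}).toReal < s := by linarith
          obtain ⟨q, hqT, hq⟩ := exists_lt_of_lt_csSup ⟨p₀, hp₀⟩ hlt'
          exact ⟨h𝒳, hTmono _ (hprobc X) q hqT hq.le⟩
  · rintro ⟨α, hα, (hA | hA)⟩
    · exact threshold_props μ 𝒳 h𝒳m (fun p => p < 1 - α)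
        (fun p q hqp hp => lt_of_le_of_lt hqp hp) A hA
    · exact threshold_props μ 𝒳 h𝒳m (fun p => p ≤ 1 - α)
        (fun p q hqp hp => le_trans hqp hp) A hA
end

section
/- Let Ω = {ω₁,…,ω_n} with P(ω_i) = 1/n for all i (an equi-probable finite probability space). A set A of random variables on Ω is surplus-invariant, law-invariant, and conic if and only if A is empty or A = {X : P(X < 0) ≤ 1-α} for some α ∈ [0,1]. Moreover, for any α ∈ [0,1), the set {X : P(X<0) < 1-α} equals {X : P(X<0) ≤ 1-α'} where α' = 1 - (⌈n(1-α)⌉ - 1)/n. -/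
open MeasureTheory

lemma meas_finset {Ω : Type*} [Fintype Ω]
    [MeasurableSpace Ω] [MeasurableSingletonClass Ω]
    (μ : Measure Ω)
    (hunif : ∀ ω : Ω, μ {ω} = ((Fintype.card Ω : ENNReal))⁻¹)
    (F : Finset Ω) :
    μ ↑F = (F.card : ENNReal) * ((Fintype.card Ω : ENNReal))⁻¹ := by
  have h : (↑F : Set Ω) = ⋃ ω ∈ F, {ω} := by ext x; simp
  rw [h, measure_biUnion_finset]
  · simp [hunif, Finset.sum_const, nsmul_eq_mul]
  · intro a _ b _ hab
    simp [Set.disjoint_singleton, hab]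
  · intro b _; exact measurableSet_singleton b

lemma meas_toReal {Ω : Type*} [Fintype Ω] [Nonempty Ω]
    [MeasurableSpace Ω] [MeasurableSingletonClass Ω]
    (μ : Measure Ω)
    (hunif : ∀ ω : Ω, μ {ω} = ((Fintype.card Ω : ENNReal))⁻¹)
    (F : Finset Ω) :
    (μ ↑F).toReal = (F.card : ℝ) / (Fintype.card Ω : ℝ) := by
  rw [meas_finset μ hunif]
  have hn : (Fintype.card Ω : ENNReal) ≠ 0 := by
    simp [Fintype.card_ne_zero]
  rw [ENNReal.toReal_mul, ENNReal.toReal_inv]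
  simp [div_eq_mul_inv]

lemma map_ind_eq {Ω : Type*} [Fintype Ω] [DecidableEq Ω]
    [MeasurableSpace Ω] [MeasurableSingletonClass Ω]
    (μ : Measure Ω)
    (hunif : ∀ ω : Ω, μ {ω} = ((Fintype.card Ω : ENNReal))⁻¹)
    (F G : Finset Ω) (h : F.card = G.card) :
    μ.map (fun ω => if ω ∈ F then (-1:ℝ) else 0) =
      μ.map (fun ω => if ω ∈ G then (-1:ℝ) else 0) := by
  classical
  have key : ∀ H : Finset Ω, ∀ t : Set ℝ,
      μ ((fun ω => if ω ∈ H then (-1:ℝ) else 0) ⁻¹' t) =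
      (if (-1:ℝ) ∈ t then (H.card : ENNReal) * ((Fintype.card Ω : ENNReal))⁻¹ else 0)
      + (if (0:ℝ) ∈ t then (Hᶜ.card : ENNReal) * ((Fintype.card Ω : ENNReal))⁻¹ else 0) := by
    intro H t
    by_cases h1 : (-1:ℝ) ∈ t <;> by_cases h0 : (0:ℝ) ∈ t <;> simp only [h1, h0, if_true,
      if_false, add_zero, zero_add]
    · have hp : (fun ω => if ω ∈ H then (-1:ℝ) else 0) ⁻¹' t = Set.univ := by
        ext ω; by_cases hω : ω ∈ H <;> simp [hω, h1, h0]
      rw [hp, ← Finset.coe_univ, meas_finset μ hunif, ← add_mul, ← Nat.cast_add,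
        Finset.card_add_card_compl, Finset.card_univ]
    · have hp : (fun ω => if ω ∈ H then (-1:ℝ) else 0) ⁻¹' t = ↑H := by
        ext ω; by_cases hω : ω ∈ H <;> simp [hω, h1, h0]
      rw [hp, meas_finset μ hunif]
    · have hp : (fun ω => if ω ∈ H then (-1:ℝ) else 0) ⁻¹' t = ↑Hᶜ := by
        ext ω; by_cases hω : ω ∈ H <;> simp [hω, h1, h0]
      rw [hp, meas_finset μ hunif]
    · have hp : (fun ω => if ω ∈ H then (-1:ℝ) else 0) ⁻¹' t = ∅ := by
        ext ω; by_cases hω : ω ∈ H <;> simp [hω, h1, h0]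
      rw [hp, measure_empty]
  have hc : Fᶜ.card = Gᶜ.card := by simp [Finset.card_compl, h]
  ext t ht
  rw [Measure.map_apply (measurable_of_finite _) ht,
    Measure.map_apply (measurable_of_finite _) ht, key, key, h, hc]

/-- On an equi-probable finite probability space, a set `A` of random variables is
surplus-invariant, law-invariant, and conic if and only if it is empty or equals
`{X : P(X < 0) ≤ 1 - α}` for some `α ∈ [0,1]`. Moreover, for `α ∈ [0,1)` the set
`{X : P(X < 0) < 1 - α}` equals `{X : P(X < 0) ≤ 1 - α'}` with
`α' = 1 - (⌈n(1-α)⌉ - 1)/n`, where `n` is the number of states. -/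
theorem stmt_19 {Ω : Type*} [Fintype Ω] [Nonempty Ω]
    [MeasurableSpace Ω] [MeasurableSingletonClass Ω]
    (μ : Measure Ω) [IsProbabilityMeasure μ]
    (hunif : ∀ ω : Ω, μ {ω} = ((Fintype.card Ω : ENNReal))⁻¹)
    (A : Set (Ω → ℝ)) :
    (((∀ X ∈ A, ∀ Y : Ω → ℝ,
          (∀ ω, max (-(Y ω)) 0 ≤ max (-(X ω)) 0) → Y ∈ A) ∧
        (∀ X ∈ A, ∀ Y : Ω → ℝ, μ.map Y = μ.map X → Y ∈ A) ∧
        (∀ X ∈ A, ∀ c : ℝ, 0 < c → (fun ω => c * X ω) ∈ A)) ↔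
      (A = ∅ ∨ ∃ α ∈ Set.Icc (0 : ℝ) 1,
        A = {X | (μ {ω | X ω < 0}).toReal ≤ 1 - α})) ∧
    (∀ α ∈ Set.Ico (0 : ℝ) 1, ∀ α' : ℝ,
      α' = 1 - ((⌈(Fintype.card Ω : ℝ) * (1 - α)⌉ : ℝ) - 1) / (Fintype.card Ω : ℝ) →
      {X : Ω → ℝ | (μ {ω | X ω < 0}).toReal < 1 - α} =
        {X : Ω → ℝ | (μ {ω | X ω < 0}).toReal ≤ 1 - α'}) := by
  classical
  set n := Fintype.card Ω with hn_def
  have hn : 0 < (n : ℝ) := by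
    have := Fintype.card_pos (α := Ω)
    positivity
  -- counting function
  set cnt : (Ω → ℝ) → Finset Ω := fun X => Finset.univ.filter (fun ω => X ω < 0) with hcnt_def
  have hset : ∀ X : Ω → ℝ, {ω | X ω < 0} = ↑(cnt X) := by
    intro X; ext ω; simp [hcnt_def]
  have hcard : ∀ X : Ω → ℝ, (μ {ω | X ω < 0}).toReal = ((cnt X).card : ℝ) / n := by
    intro X; rw [hset X, meas_toReal μ hunif]
  have hcntle : ∀ X : Ω → ℝ, (cnt X).card ≤ n := fun X => Finset.card_filter_le _ _
  constructor
  · constructor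
    · -- forward direction
      rintro ⟨hs, hl, hc⟩
      by_cases hA : A = ∅
      · exact Or.inl hA
      right
      obtain ⟨X₀, hX₀⟩ := Set.nonempty_iff_ne_empty.mpr hA
      set K : Set ℕ := (fun X => (cnt X).card) '' A with hK_def
      have hKne : K.Nonempty := ⟨_, X₀, hX₀, rfl⟩
      have hKbdd : BddAbove K := by
        refine ⟨n, ?_⟩
        rintro k ⟨X, _, rfl⟩
        exact hcntle X
      set m := sSup K with hm_def
      obtain ⟨X₁, hX₁A, hX₁⟩ : ∃ X ∈ A, (cnt X).card = m := Nat.sSup_mem hKne hKbdd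
      have hub : ∀ X ∈ A, (cnt X).card ≤ m := fun X hX => le_csSup hKbdd ⟨X, hX, rfl⟩
      have hmn : m ≤ n := hX₁ ▸ hcntle X₁
      -- main claim
      have claim : ∀ Y : Ω → ℝ, (cnt Y).card ≤ m → Y ∈ A := by
        intro Y hY
        by_cases hT : (cnt Y).Nonempty
        · -- S := cnt X₁ is nonempty
          have hS : (cnt X₁).Nonempty := by
            rw [← Finset.card_pos, hX₁]
            exact lt_of_lt_of_le (Finset.card_pos.mpr hT) hY
          have hSneg : ∀ ω ∈ cnt X₁, X₁ ω < 0 := by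
            intro ω hω; simpa [hcnt_def] using hω
          set c₁ : ℝ := ∑ ω ∈ cnt X₁, (-X₁ ω)⁻¹ with hc₁_def
          have hc₁pos : 0 < c₁ :=
            Finset.sum_pos (fun ω hω => inv_pos.mpr (by linarith [hSneg ω hω])) hS
          have h1 : (fun ω => c₁ * X₁ ω) ∈ A := hc X₁ hX₁A c₁ hc₁pos
          set Z : Ω → ℝ := fun ω => if ω ∈ cnt X₁ then (-1:ℝ) else 0 with hZ_def
          have h2 : Z ∈ A := by
            refine hs _ h1 Z ?_
            intro ω
            by_cases hω : ω ∈ cnt X₁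
            · have hneg := hSneg ω hω
              have hle : (-X₁ ω)⁻¹ ≤ c₁ :=
                Finset.single_le_sum (f := fun ω => (-X₁ ω)⁻¹)
                  (fun i hi => le_of_lt (inv_pos.mpr (by linarith [hSneg i hi]))) hω
              have : (1:ℝ) ≤ c₁ * (-X₁ ω) := by
                calc (1:ℝ) = (-X₁ ω)⁻¹ * (-X₁ ω) := by
                      rw [inv_mul_cancel₀ (by linarith)]
                  _ ≤ c₁ * (-X₁ ω) := by
                      apply mul_le_mul_of_nonneg_right hle (by linarith)
              have h1' : -(c₁ * X₁ ω) = c₁ * (-X₁ ω) := by ring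
              simp only [hZ_def, hω, if_true]
              rw [h1']
              calc max (-(-1:ℝ)) 0 = 1 := by norm_num
                _ ≤ c₁ * (-X₁ ω) := this
                _ ≤ max (c₁ * (-X₁ ω)) 0 := le_max_left _ _
            · simp only [hZ_def, hω, if_false]
              simp [le_max_iff]
          -- superset S' of cnt Y with same card as cnt X₁
          obtain ⟨S', hTS', hS'card⟩ :=
            Finset.exists_superset_card_eq (s := cnt Y) (n := (cnt X₁).card)
              (le_trans hY hX₁.ge) (hcntle X₁)
          set Z' : Ω → ℝ := fun ω => if ω ∈ S' then (-1:ℝ) else 0 with hZ'_def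
          have h3 : Z' ∈ A := by
            refine hl Z h2 Z' ?_
            exact map_ind_eq μ hunif S' (cnt X₁) hS'card
          set c₂ : ℝ := 1 + ∑ ω : Ω, max (-Y ω) 0 with hc₂_def
          have hsumnn : 0 ≤ ∑ ω : Ω, max (-Y ω) 0 :=
            Finset.sum_nonneg (fun i _ => le_max_right _ _)
          have hc₂pos : 0 < c₂ := by linarith
          have h4 : (fun ω => c₂ * Z' ω) ∈ A := hc Z' h3 c₂ hc₂pos
          refine hs _ h4 Y ?_
          intro ω
          by_cases hω : ω ∈ S'
          · have : max (-Y ω) 0 ≤ c₂ := by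
              have := Finset.single_le_sum (f := fun ω => max (-Y ω) 0)
                (fun i _ => le_max_right _ _) (Finset.mem_univ ω)
              linarith
            simp only [hZ'_def, hω, if_true]
            have h5 : -(c₂ * (-1:ℝ)) = c₂ := by ring
            rw [h5]
            exact le_trans this (le_max_left _ _)
          · have hωT : ω ∉ cnt Y := fun h => hω (hTS' h)
            have hYω : 0 ≤ Y ω := by
              by_contra h
              exact hωT (by simp [hcnt_def]; linarith)
            have : max (-Y ω) 0 = 0 := max_eq_right (by linarith)
            rw [this]
            simp [le_max_iff]
        · -- cnt Y empty : Y ≥ 0 everywhere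
          refine hs X₁ hX₁A Y ?_
          intro ω
          have hYω : 0 ≤ Y ω := by
            by_contra h
            exact hT ⟨ω, by simp [hcnt_def]; linarith⟩
          have : max (-Y ω) 0 = 0 := max_eq_right (by linarith)
          rw [this]
          simp [le_max_iff]
      refine ⟨1 - (m : ℝ) / n, ⟨?_, ?_⟩, ?_⟩
      · have h : (m:ℝ)/n ≤ 1 := by
          rw [div_le_one hn]; exact_mod_cast hmn
        linarith
      · have : (m : ℝ) / n ≥ 0 := by positivity
        linarith
      · ext X
        simp only [Set.mem_setOf_eq, hcard X]
        have heq : 1 - (1 - (m:ℝ)/n) = (m:ℝ)/n := by ring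
        rw [heq, div_le_div_iff_of_pos_right hn, Nat.cast_le]
        constructor
        · exact fun hX => hub X hX
        · exact fun h => claim X h
    · -- backward direction
      rintro (rfl | ⟨α, ⟨hα0, hα1⟩, rfl⟩)
      · exact ⟨fun X hX => absurd hX (Set.notMem_empty X),
          fun X hX => absurd hX (Set.notMem_empty X),
          fun X hX => absurd hX (Set.notMem_empty X)⟩
      refine ⟨?_, ?_, ?_⟩
      · -- surplus invariance
        intro X hX Y hXY
        simp only [Set.mem_setOf_eq] at hX ⊢
        refine le_trans ?_ hX
        apply ENNReal.toReal_mono (measure_ne_top _ _)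
        apply measure_mono
        intro ω hω
        simp only [Set.mem_setOf_eq] at hω ⊢
        by_contra h
        push_neg at h
        have h1 := hXY ω
        have h2 : max (-Y ω) 0 = -Y ω := max_eq_left (by linarith)
        have h3 : max (-X ω) 0 = 0 := max_eq_right (by linarith)
        rw [h2, h3] at h1
        linarith
      · -- law invariance
        intro X hX Y hXY
        simp only [Set.mem_setOf_eq] at hX ⊢
        have key : μ {ω | Y ω < 0} = μ {ω | X ω < 0} := by
          have h1 : {ω | Y ω < 0} = Y ⁻¹' (Set.Iio 0) := rfl
          have h2 : {ω | X ω < 0} = X ⁻¹' (Set.Iio 0) := rfl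
          rw [h1, h2, ← Measure.map_apply (measurable_of_finite Y) measurableSet_Iio,
            ← Measure.map_apply (measurable_of_finite X) measurableSet_Iio, hXY]
        rw [key]; exact hX
      · -- conicity
        intro X hX c hcpos
        simp only [Set.mem_setOf_eq] at hX ⊢
        have : {ω | c * X ω < 0} = {ω | X ω < 0} := by
          ext ω
          simp only [Set.mem_setOf_eq]
          constructor
          · intro h; nlinarith
          · intro h; exact mul_neg_of_pos_of_neg hcpos h
        rw [this]; exact hX
  · -- part 2
    intro α ⟨hα0, hα1⟩ α' hα'
    have ht : (0:ℝ) < (n:ℝ) * (1 - α) := by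
      apply mul_pos hn; linarith
    set t : ℝ := (n:ℝ) * (1 - α) with ht_def
    have h1α' : 1 - α' = ((⌈t⌉ : ℝ) - 1) / n := by rw [hα']; ring
    ext X
    simp only [Set.mem_setOf_eq, hcard X, h1α']
    rw [div_lt_iff₀ hn, div_le_div_iff_of_pos_right hn]
    constructor
    · intro h
      have h2 : ((cnt X).card : ℤ) < ⌈t⌉ := Int.lt_ceil.mpr (by push_cast; linarith)
      have h3 : ((cnt X).card : ℤ) ≤ ⌈t⌉ - 1 := by omega
      calc ((cnt X).card : ℝ) ≤ ((⌈t⌉ : ℤ) : ℝ) - 1 := by exact_mod_cast h3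
        _ = (⌈t⌉ : ℝ) - 1 := by norm_num
    · intro h
      have h2 : (⌈t⌉ : ℝ) < t + 1 := Int.ceil_lt_add_one t
      have : ((cnt X).card : ℝ) < t := by linarith
      linarith [this]
end
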